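/- The generic (non-atomic) cut rule is derivable from atomic cut and switch: for all structures R, T and any context S{ }, if S(R,T,[¬R,¬T]) is derivable then S{f} is derivable using only switch, atomic cut, and structural equivalence, by induction on R and T. In particular, any instance of the cut i↑: S(R,¬R) ⟹ S{f} can be replaced by a derivation using only s and ai↑. -/

import Mathlib

/-- Structures of system SKS. -/
inductive Str : Type
  | f : Str
  | t : Str
  | atom (n : ℕ) : Str
  | or (A B : Str) : Str
  | and (A B : Str) : Str
  | neg (A : Str) : Str

/-- Positive contexts: a structure with one hole, not under a negation. -/
inductive Ctx : Type
  | hole : Ctx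
  | orl (S : Ctx) (T : Str) : Ctx
  | orr (T : Str) (S : Ctx) : Ctx
  | andl (S : Ctx) (T : Str) : Ctx
  | andr (T : Str) (S : Ctx) : Ctx

def Ctx.fill : Ctx → Str → Str
  | .hole, R => R
  | .orl S T, R => .or (S.fill R) T
  | .orr T S, R => .or T (S.fill R)
  | .andl S T, R => .and (S.fill R) T
  | .andr T S, R => .and T (S.fill R)

/-- Structural equivalence `=` of SKS. -/
inductive equiv : Str → Str → Prop
  | refl (R) : equiv R R
  | symm {A B} : equiv A B → equiv B A
  | trans {A B C} : equiv A B → equiv B C → equiv A C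
  | or_congr {A B C D} : equiv A B → equiv C D → equiv (.or A C) (.or B D)
  | and_congr {A B C D} : equiv A B → equiv C D → equiv (.and A C) (.and B D)
  | neg_congr {A B} : equiv A B → equiv (.neg A) (.neg B)
  | or_assoc (A B C) : equiv (.or (.or A B) C) (.or A (.or B C))
  | or_comm (A B) : equiv (.or A B) (.or B A)
  | and_assoc (A B C) : equiv (.and (.and A B) C) (.and A (.and B C))
  | and_comm (A B) : equiv (.and A B) (.and B A)
  | dm_or (A B) : equiv (.neg (.or A B)) (.and (.neg A) (.neg B))
  | dm_and (A B) : equiv (.neg (.and A B)) (.or (.neg A) (.neg B))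
  | neg_neg (A) : equiv (.neg (.neg A)) A
  | neg_f : equiv (.neg .f) .t
  | neg_t : equiv (.neg .t) .f
  | or_f (R) : equiv (.or .f R) R
  | and_t (R) : equiv (.and .t R) R
  | or_t_t : equiv (.or .t .t) .t
  | and_f_f : equiv (.and .f .f) .f

/-- Steps using only switch and atomic cut. -/
inductive stepCut : Str → Str → Prop
  | ai_up (S : Ctx) (a : ℕ) :
      stepCut (S.fill (.and (.atom a) (.neg (.atom a)))) (S.fill .f)
  | s (S : Ctx) (R U T : Str) :
      stepCut (S.fill (.and (.or R U) T)) (S.fill (.or (.and R T) U))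

inductive derivCut : Str → Str → Prop
  | refl (R) : derivCut R R
  | step {A B C} : stepCut A B → derivCut B C → derivCut A C
  | eq {A B C} : equiv A B → derivCut B C → derivCut A C

/-
Cut is reduced to cuts on smaller structures. By De Morgan, `¬(A,B) = [¬A,¬B]`, and then
`((A,B),[¬A,¬B]) = (A,([¬B,¬A],B))` switches to `(A,[(¬B,B),¬A])`: a cut on `B` leaves `(A,¬A)`,
and a cut on `A` leaves `f`. The case `[A,B]` is the same argument applied to `¬A` and `¬B`, the
units are absorbed by the equations of `=`, and atoms are cut by `ai↑`. Derivations without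
context are lifted into any context `S{ }`, since both rules are closed under composing contexts.
-/

local infix:50 " ⇝ " => derivCut

def Ctx.comp : Ctx → Ctx → Ctx
  | .hole, D => D
  | .orl S T, D => .orl (S.comp D) T
  | .orr T S, D => .orr T (S.comp D)
  | .andl S T, D => .andl (S.comp D) T
  | .andr T S, D => .andr T (S.comp D)

theorem Ctx.fill_comp (S D : Ctx) (R : Str) : (S.comp D).fill R = S.fill (D.fill R) := by
  induction S <;> simp only [Ctx.comp, Ctx.fill, *]

theorem equiv.fill (S : Ctx) {A B : Str} (h : equiv A B) : equiv (S.fill A) (S.fill B) := by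
  induction S with
  | hole => exact h
  | orl S T ih => exact ih.or_congr (.refl T)
  | orr T S ih => exact (equiv.refl T).or_congr ih
  | andl S T ih => exact ih.and_congr (.refl T)
  | andr T S ih => exact (equiv.refl T).and_congr ih

theorem stepCut.fill (S : Ctx) {A B : Str} (h : stepCut A B) : stepCut (S.fill A) (S.fill B) := by
  cases h with
  | ai_up D a => simpa only [Ctx.fill_comp] using stepCut.ai_up (S.comp D) a
  | s D R U T => simpa only [Ctx.fill_comp] using stepCut.s (S.comp D) R U T

namespace derivCut

theorem trans {A B C : Str} (h₁ : A ⇝ B) (h₂ : B ⇝ C) : A ⇝ C := by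
  induction h₁ with
  | refl => exact h₂
  | step s _ ih => exact .step s (ih h₂)
  | eq e _ ih => exact .eq e (ih h₂)

instance : Trans derivCut derivCut derivCut := ⟨trans⟩

theorem of_equiv {A B : Str} (h : equiv A B) : A ⇝ B := .eq h (.refl B)

theorem switch (R U T : Str) : .and (.or R U) T ⇝ .or (.and R T) U :=
  .step (stepCut.s .hole R U T) (.refl _)

theorem fill (S : Ctx) {A B : Str} (h : A ⇝ B) : S.fill A ⇝ S.fill B := by
  induction h with
  | refl => exact .refl _
  | step s _ ih => exact .step (s.fill S) ih
  | eq e _ ih => exact .eq (e.fill S) ih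

end derivCut

def CutDerivable (R : Str) : Prop := .and R (.neg R) ⇝ .f

theorem CutDerivable.neg {R : Str} (h : CutDerivable R) : CutDerivable (.neg R) :=
  .eq (((equiv.refl _).and_congr (equiv.neg_neg R)).trans (equiv.and_comm _ _)) h

theorem CutDerivable.and_or_neg {R T : Str} (hR : CutDerivable R) (hT : CutDerivable T) :
    .and (.and R T) (.or (.neg R) (.neg T)) ⇝ .f :=
  calc .and (.and R T) (.or (.neg R) (.neg T))
        ⇝ .and R (.and (.or (.neg T) (.neg R)) T) :=
        .of_equiv <| (equiv.and_assoc R T _).trans <| (equiv.refl R).and_congr <|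
          (equiv.and_comm T _).trans ((equiv.or_comm _ _).and_congr (.refl T))
    _ ⇝ .and R (.or (.and (.neg T) T) (.neg R)) := (derivCut.switch _ _ _).fill (.andr R .hole)
    _ ⇝ .and R (.or .f (.neg R)) :=
        (derivCut.eq (equiv.and_comm _ _) hT).fill (.andr R (.orl .hole (.neg R)))
    _ ⇝ .and R (.neg R) := .of_equiv ((equiv.refl R).and_congr (equiv.or_f _))
    _ ⇝ .f := hR

theorem cutDerivable (R : Str) : CutDerivable R := by
  induction R with
  | f => exact .of_equiv <| ((equiv.refl _).and_congr equiv.neg_f).trans <|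
      (equiv.and_comm _ _).trans (equiv.and_t _)
  | t => exact .of_equiv (((equiv.refl _).and_congr equiv.neg_t).trans (equiv.and_t _))
  | atom a => exact .step (stepCut.ai_up .hole a) (.refl _)
  | neg A ih => exact ih.neg
  | and A B ihA ihB => exact .eq ((equiv.refl _).and_congr (equiv.dm_and A B)) (ihA.and_or_neg ihB)
  | or A B ihA ihB =>
    have dual : equiv (.and (.or A B) (.neg (.or A B)))
        (.and (.and (.neg A) (.neg B)) (.or (.neg (.neg A)) (.neg (.neg B)))) :=
      ((equiv.refl _).and_congr (equiv.dm_or A B)).trans <| (equiv.and_comm _ _).trans <|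
        (equiv.refl _).and_congr ((equiv.neg_neg A).or_congr (equiv.neg_neg B)).symm
    exact .eq dual (ihA.neg.and_or_neg ihB.neg)

theorem generic_cut_derivable :
    (∀ (S : Ctx) (R T : Str),
      derivCut (S.fill (.and (.and R T) (.or (.neg R) (.neg T)))) (S.fill .f)) ∧
    (∀ (S : Ctx) (R : Str),
      derivCut (S.fill (.and R (.neg R))) (S.fill .f)) :=
  ⟨fun S R T => ((cutDerivable R).and_or_neg (cutDerivable T)).fill S,
    fun S R => (cutDerivable R).fill S⟩
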